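/- arXiv:1406.1627 — 3 statements merged into one kernel-verified Lean document; each statement's English description precedes it below -/
import Mathlib

section
/- Let h ∈ H¹(0,1) with ∫₀¹ h(t)² dt = 1. Then ∫₀¹ h(t)⁴ dt ≤ 1 + 4 ∫₀¹ |h'(t)|² dt, with equality when h ≡ 1. -/
open MeasureTheory intervalIntegral Set

/-! By the mean value theorem for integrals, `h²` attains its average `1` at some `t₀`. The
fundamental theorem of calculus for `h²` between `t₀` and `t`, Cauchy–Schwarz and the
normalization give `(h(t)² - 1)² ≤ (2 ∫₀¹ |h h'|)² ≤ 4 ∫₀¹ h'²`; integrating the resulting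
pointwise bound `h⁴ ≤ 4 ∫₀¹ h'² - 1 + 2 h²` over `[0, 1]` gives the claim. -/

theorem sq_integral_abs_mul_le {α : Type*} [MeasurableSpace α] {μ : Measure α} {f g : α → ℝ}
    (hf : MemLp f 2 μ) (hg : MemLp g 2 μ) :
    (∫ x, |f x * g x| ∂μ) ^ 2 ≤ (∫ x, f x ^ 2 ∂μ) * ∫ x, g x ^ 2 ∂μ := by
  have hf2 := hf.integrable_sq
  have hg2 := hg.integrable_sq
  have hfg : Integrable (fun x => |f x * g x|) μ := (hf.integrable_mul hg).abs
  have hquad : ∀ r : ℝ, 0 ≤ (∫ x, f x ^ 2 ∂μ) * (r * r) + 2 * (∫ x, |f x * g x| ∂μ) * r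
      + ∫ x, g x ^ 2 ∂μ := fun r => by
    have hexp : ∀ x, (r * |f x| + |g x|) ^ 2 = r ^ 2 * f x ^ 2 + 2 * r * |f x * g x| + g x ^ 2 :=
      fun x => by rw [abs_mul]; ring_nf; simp only [sq_abs]
    have : 0 ≤ ∫ x, (r * |f x| + |g x|) ^ 2 ∂μ := integral_nonneg fun x => sq_nonneg _
    simp only [hexp] at this
    rw [integral_add (f := fun x => r ^ 2 * f x ^ 2 + 2 * r * |f x * g x|)
      ((hf2.const_mul _).add (hfg.const_mul _)) hg2,
      integral_add (hf2.const_mul _) (hfg.const_mul _), MeasureTheory.integral_const_mul,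
      MeasureTheory.integral_const_mul] at this
    linarith
  have := discrim_le_zero hquad
  rw [discrim] at this
  nlinarith

theorem abs_sub_le_integral_abs_of_hasDerivAt {f f' : ℝ → ℝ} {a b s t : ℝ}
    (hf : ∀ x ∈ Icc a b, HasDerivAt f (f' x) x) (hf' : IntervalIntegrable f' volume a b)
    (hs : s ∈ Icc a b) (ht : t ∈ Icc a b) :
    |f t - f s| ≤ ∫ x in a..b, |f' x| := by
  have hab : a ≤ b := hs.1.trans hs.2
  have hst : uIcc s t ⊆ uIcc a b := uIcc_of_le hab ▸ uIcc_subset_Icc hs ht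
  calc |f t - f s| = |∫ x in s..t, f' x| := by
        rw [integral_eq_sub_of_hasDerivAt (fun x hx => hf x (uIcc_subset_Icc hs ht hx))
          (hf'.mono_set hst)]
    _ ≤ abs (∫ x in s..t, |f' x|) := by
        simpa only [Real.norm_eq_abs] using norm_integral_le_abs_integral_norm (f := f')
    _ ≤ abs (∫ x in a..b, |f' x|) := abs_integral_mono_interval
        (uIoc_subset_uIoc_of_uIcc_subset_uIcc hst) (.of_forall fun x => abs_nonneg _) hf'.abs
    _ = ∫ x in a..b, |f' x| :=
        abs_of_nonneg (integral_nonneg hab fun x _ => abs_nonneg _)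

theorem aestronglyMeasurable_restrict_of_hasDerivAt {E : Type*} [NormedAddCommGroup E]
    [NormedSpace ℝ E] [CompleteSpace E] {f f' : ℝ → E} {s : Set ℝ} {μ : Measure ℝ}
    (hs : MeasurableSet s) (hf : ∀ x ∈ s, HasDerivAt f (f' x) x) :
    AEStronglyMeasurable f' (μ.restrict s) :=
  (aestronglyMeasurable_deriv f _).congr <|
    (ae_restrict_iff' hs).2 (.of_forall fun x hx => (hf x hx).deriv)

theorem sq_sub_one_sq_le_four_integral_deriv_sq {h h' : ℝ → ℝ}
    (hderiv : ∀ t ∈ Icc (0:ℝ) 1, HasDerivAt h (h' t) t)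
    (hint : IntervalIntegrable (fun t => h' t ^ 2) volume 0 1)
    (hnorm : ∫ t in (0:ℝ)..1, h t ^ 2 = 1) {t : ℝ} (ht : t ∈ Icc (0:ℝ) 1) :
    (h t ^ 2 - 1) ^ 2 ≤ 4 * ∫ t in (0:ℝ)..1, h' t ^ 2 := by
  have hcont : ContinuousOn h (Icc 0 1) := HasDerivAt.continuousOn hderiv
  obtain ⟨t₀, ht₀, h_t₀⟩ : ∃ t₀ ∈ Icc (0:ℝ) 1, h t₀ ^ 2 = 1 := by
    obtain ⟨c, hc, hc_avg⟩ := exists_eq_interval_average (f := fun t => h t ^ 2) zero_ne_one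
      (by rw [uIcc_of_le zero_le_one]; exact hcont.pow 2)
    refine ⟨c, Ioo_subset_Icc_self (by rwa [uIoo_of_le zero_le_one] at hc), ?_⟩
    rw [hc_avg, interval_average_eq_div, hnorm]
    norm_num
  have hh : MemLp h 2 (volume.restrict (Ioc 0 1)) :=
    (memLp_two_iff_integrable_sq
      ((hcont.mono Ioc_subset_Icc_self).aestronglyMeasurable measurableSet_Ioc)).2
      ((hcont.pow 2).integrableOn_Icc.mono_set Ioc_subset_Icc_self)
  have hh' : MemLp h' 2 (volume.restrict (Ioc 0 1)) :=
    (memLp_two_iff_integrable_sq (aestronglyMeasurable_restrict_of_hasDerivAt measurableSet_Ioc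
      fun x hx => hderiv x (Ioc_subset_Icc_self hx))).2
      ((intervalIntegrable_iff_integrableOn_Ioc_of_le zero_le_one).1 hint)
  have hCS : (∫ s in (0:ℝ)..1, |h s * h' s|) ^ 2 ≤ ∫ s in (0:ℝ)..1, h' s ^ 2 := by
    have := sq_integral_abs_mul_le hh hh'
    rwa [← integral_of_le zero_le_one, ← integral_of_le zero_le_one,
      ← integral_of_le zero_le_one, hnorm, one_mul] at this
  have hdiff : |h t ^ 2 - h t₀ ^ 2| ≤ ∫ s in (0:ℝ)..1, |2 * (h s * h' s)| :=
    abs_sub_le_integral_abs_of_hasDerivAt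
      (fun x hx => by simpa [mul_assoc] using (hderiv x hx).pow 2)
      ((intervalIntegrable_iff_integrableOn_Ioc_of_le zero_le_one).2
        ((hh.integrable_mul hh').const_mul 2)) ht₀ ht
  rw [h_t₀] at hdiff
  simp only [abs_mul (2:ℝ), abs_two, intervalIntegral.integral_const_mul] at hdiff
  calc (h t ^ 2 - 1) ^ 2 = |h t ^ 2 - 1| ^ 2 := (sq_abs _).symm
    _ ≤ (2 * ∫ s in (0:ℝ)..1, |h s * h' s|) ^ 2 := by gcongr
    _ = 4 * (∫ s in (0:ℝ)..1, |h s * h' s|) ^ 2 := by ring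
    _ ≤ 4 * ∫ t in (0:ℝ)..1, h' t ^ 2 := by gcongr

/-- For `h ∈ H¹(0,1)` with `∫₀¹ h² = 1` one has `∫₀¹ h⁴ ≤ 1 + 4∫₀¹ |h'|²`, with
equality when `h ≡ 1`. -/
theorem h4_le_one_add_four_deriv (h h' : ℝ → ℝ)
    (hderiv : ∀ t ∈ Set.Icc (0:ℝ) 1, HasDerivAt h (h' t) t)
    (hint : IntervalIntegrable (fun t => h' t ^ 2) volume 0 1)
    (hnorm : (∫ t in (0:ℝ)..1, h t ^ 2) = 1) :
    (∫ t in (0:ℝ)..1, h t ^ 4) ≤ 1 + 4 * ∫ t in (0:ℝ)..1, h' t ^ 2 ∧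
    ((h = fun _ => 1) → (h' = fun _ => 0) →
      (∫ t in (0:ℝ)..1, h t ^ 4) = 1 + 4 * ∫ t in (0:ℝ)..1, h' t ^ 2) := by
  refine ⟨?_, by rintro rfl rfl; simp⟩
  set B := ∫ t in (0:ℝ)..1, h' t ^ 2
  have hcont : ContinuousOn h (Icc 0 1) := HasDerivAt.continuousOn hderiv
  have hsq : IntervalIntegrable (fun t => h t ^ 2) volume 0 1 :=
    (hcont.pow 2).intervalIntegrable_of_Icc zero_le_one
  have hpoint : ∀ t ∈ Icc (0:ℝ) 1, h t ^ 4 ≤ (4 * B - 1) + 2 * h t ^ 2 := fun t ht => by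
    nlinarith [sq_sub_one_sq_le_four_integral_deriv_sq hderiv hint hnorm ht]
  calc (∫ t in (0:ℝ)..1, h t ^ 4) ≤ ∫ t in (0:ℝ)..1, ((4 * B - 1) + 2 * h t ^ 2) :=
        integral_mono_on zero_le_one ((hcont.pow 4).intervalIntegrable_of_Icc zero_le_one)
          (intervalIntegrable_const.add (hsq.const_mul 2)) hpoint
    _ = 1 + 4 * B := by
        rw [integral_add intervalIntegrable_const (hsq.const_mul 2),
          intervalIntegral.integral_const_mul, hnorm]
        simp only [intervalIntegral.integral_const, sub_zero, one_smul]
        ring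
end

section
/- Let c ≥ 2√2 π and let h : (0,1) → [0,∞) be measurable with ∫₀¹ h² dt = 1. Then ¼ ∫₀¹ h⁴ dt + (π²/c²) (∫₀¹ h^{2/3} dt)³ ≥ ¼ + π²/c², with equality for h ≡ 1. -/
/-!
Write `A = ∫₀¹ h⁴` and `B = ∫₀¹ h^{2/3}`. With `∫₀¹ h² = 1`, Cauchy–Schwarz gives `A ≥ 1`, and
Hölder applied to `h² = (h⁴)^{2/5} (h^{2/3})^{3/5}` gives `A² B³ ≥ 1`. So `B³ ≥ A⁻²`, and with
`k = π²/c² ≤ 1/8` the bound `A/4 + k A⁻² ≥ 1/4 + k` reduces to `(A - 1)(A²/4 - k(A + 1)) ≥ 0`,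
which holds since `A + 1 ≤ 2A²` for `A ≥ 1`.
-/

open MeasureTheory Set Real
open scoped ENNReal

theorem pi_sq_div_sq_le_one_div_eight {c : ℝ} (hc : 2 * √2 * π ≤ c) : π ^ 2 / c ^ 2 ≤ 1 / 8 := by
  have hc0 : 0 < c := lt_of_lt_of_le (by positivity) hc
  rw [div_le_iff₀ (by positivity)]
  have := pow_le_pow_left₀ (by positivity) hc 2
  rw [mul_pow, mul_pow, Real.sq_sqrt zero_le_two] at this
  linarith

theorem quarter_add_le_of_one_le_sq_mul_cube {k a b : ℝ} (hk0 : 0 ≤ k) (hk : k ≤ 1 / 8)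
    (ha : 1 ≤ a) (hab : 1 ≤ a ^ 2 * b ^ 3) :
    1 / 4 + k ≤ a / 4 + k * b ^ 3 := by
  have hsq : a + 1 ≤ 2 * a ^ 2 := by nlinarith
  have hcubic : a ^ 2 * (1 / 4 + k) ≤ a ^ 3 / 4 + k := by
    nlinarith [mul_nonneg (sub_nonneg.mpr ha) (sub_nonneg.mpr hsq)]
  refine le_of_mul_le_mul_left ?_ (by positivity : 0 < a ^ 2)
  nlinarith [mul_le_mul_of_nonneg_left hab hk0]

theorem ENNReal.ofReal_quarter_add_le_of_one_le_sq_mul_cube {k : ℝ} (hk0 : 0 < k)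
    (hk : k ≤ 1 / 8) {A B : ℝ≥0∞} (hA : 1 ≤ A) (hAB : 1 ≤ A ^ 2 * B ^ 3) :
    ENNReal.ofReal (1 / 4 + k) ≤ ENNReal.ofReal (1 / 4) * A + ENNReal.ofReal k * B ^ 3 := by
  rcases eq_or_ne A ⊤ with rfl | hA_top
  · simp
  rcases eq_or_ne B ⊤ with rfl | hB_top
  · simp [hk0]
  obtain ⟨a, ha, rfl⟩ : ∃ a, 0 ≤ a ∧ ENNReal.ofReal a = A :=
    ⟨A.toReal, ENNReal.toReal_nonneg, ENNReal.ofReal_toReal hA_top⟩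
  obtain ⟨b, hb, rfl⟩ : ∃ b, 0 ≤ b ∧ ENNReal.ofReal b = B :=
    ⟨B.toReal, ENNReal.toReal_nonneg, ENNReal.ofReal_toReal hB_top⟩
  rw [← ENNReal.ofReal_pow ha, ← ENNReal.ofReal_pow hb, ← ENNReal.ofReal_mul (by positivity),
    ENNReal.one_le_ofReal] at hAB
  rw [← ENNReal.ofReal_pow hb, ← ENNReal.ofReal_mul (by norm_num), ← ENNReal.ofReal_mul hk0.le,
    ← ENNReal.ofReal_add (by positivity) (by positivity)]
  refine ENNReal.ofReal_le_ofReal ?_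
  linarith [quarter_add_le_of_one_le_sq_mul_cube hk0.le hk (ENNReal.one_le_ofReal.mp hA) hAB]

section Lintegral

variable {α : Type*} [MeasurableSpace α] {μ : Measure α} {f : α → ℝ≥0∞}

theorem sq_lintegral_sq_le_lintegral_pow_four [IsProbabilityMeasure μ] (hf : AEMeasurable f μ) :
    (∫⁻ x, f x ^ 2 ∂μ) ^ 2 ≤ ∫⁻ x, f x ^ 4 ∂μ := by
  have hCS := ENNReal.lintegral_mul_norm_pow_le (hf.pow_const 4) (aemeasurable_const (b := 1))
    (μ := μ) (p := 2⁻¹) (q := 2⁻¹) (by norm_num) (by norm_num) (by norm_num)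
  have hpt (x : α) : (f x ^ 4) ^ (2⁻¹ : ℝ) = f x ^ 2 := by
    rw [← ENNReal.rpow_natCast_mul]; norm_num
  simp only [ENNReal.one_rpow, mul_one, hpt, lintegral_const, measure_univ] at hCS
  simpa using (ENNReal.le_rpow_inv_iff two_pos).mp hCS

theorem lintegral_sq_pow_five_le_sq_mul_cube (hf : AEMeasurable f μ) :
    (∫⁻ x, f x ^ 2 ∂μ) ^ 5 ≤ (∫⁻ x, f x ^ 4 ∂μ) ^ 2 * (∫⁻ x, f x ^ (2 / 3 : ℝ) ∂μ) ^ 3 := by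
  have hHolder := ENNReal.lintegral_mul_norm_pow_le (hf.pow_const 4) (hf.pow_const (2 / 3 : ℝ))
    (μ := μ) (p := 2 / 5) (q := 3 / 5) (by norm_num) (by norm_num) (by norm_num)
  have hpt (x : α) : (f x ^ 4) ^ (2 / 5 : ℝ) * (f x ^ (2 / 3 : ℝ)) ^ (3 / 5 : ℝ) = f x ^ 2 := by
    rw [← ENNReal.rpow_natCast_mul, ← ENNReal.rpow_mul,
      ← ENNReal.rpow_add_of_nonneg _ _ (by norm_num) (by norm_num)]
    norm_num
  simp only [hpt] at hHolder
  refine (pow_le_pow_left₀ zero_le hHolder 5).trans_eq ?_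
  rw [mul_pow, ← ENNReal.rpow_mul_natCast, ← ENNReal.rpow_mul_natCast]
  norm_num

end Lintegral

/-- For `c ≥ 2√2 π` and measurable `h ≥ 0` on `(0,1)` with `∫₀¹ h² = 1`:
`¼ ∫₀¹ h⁴ + (π²/c²)(∫₀¹ h^{2/3})³ ≥ ¼ + π²/c²`, with equality for `h ≡ 1`. -/
theorem quarter_h4_plus_holder_term_ge (c : ℝ) (hc : 2 * Real.sqrt 2 * Real.pi ≤ c)
    (h : ℝ → ℝ) (hmeas : Measurable h) (hpos : ∀ t, 0 ≤ h t)
    (hnorm : (∫⁻ t in Set.Ioo (0:ℝ) 1, ENNReal.ofReal (h t ^ 2)) = 1) :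
    ENNReal.ofReal (1/4 + Real.pi ^ 2 / c ^ 2) ≤
      ENNReal.ofReal (1/4) * (∫⁻ t in Set.Ioo (0:ℝ) 1, ENNReal.ofReal (h t ^ 4))
      + ENNReal.ofReal (Real.pi ^ 2 / c ^ 2) *
        (∫⁻ t in Set.Ioo (0:ℝ) 1, ENNReal.ofReal (h t ^ ((2:ℝ)/3))) ^ 3 ∧
    ((h = fun _ => 1) →
      ENNReal.ofReal (1/4 + Real.pi ^ 2 / c ^ 2) =
        ENNReal.ofReal (1/4) * (∫⁻ t in Set.Ioo (0:ℝ) 1, ENNReal.ofReal (h t ^ 4))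
        + ENNReal.ofReal (Real.pi ^ 2 / c ^ 2) *
          (∫⁻ t in Set.Ioo (0:ℝ) 1, ENNReal.ofReal (h t ^ ((2:ℝ)/3))) ^ 3) := by
  have hc0 : 0 < c := lt_of_lt_of_le (by positivity) hc
  have : IsProbabilityMeasure (volume.restrict (Ioo (0:ℝ) 1)) := ⟨by simp⟩
  have hpow (n : ℕ) (t : ℝ) : ENNReal.ofReal (h t ^ n) = ENNReal.ofReal (h t) ^ n :=
    ENNReal.ofReal_pow (hpos t) n
  have hrpow (t : ℝ) : ENNReal.ofReal (h t ^ (2 / 3 : ℝ)) = ENNReal.ofReal (h t) ^ (2 / 3 : ℝ) :=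
    (ENNReal.ofReal_rpow_of_nonneg (hpos t) (by norm_num)).symm
  have hF := hmeas.ennreal_ofReal.aemeasurable (μ := volume.restrict (Ioo (0:ℝ) 1))
  simp only [hpow, hrpow] at hnorm ⊢
  have hA : 1 ≤ ∫⁻ t in Ioo (0:ℝ) 1, ENNReal.ofReal (h t) ^ 4 := by
    simpa [hnorm] using sq_lintegral_sq_le_lintegral_pow_four hF
  have hAB := lintegral_sq_pow_five_le_sq_mul_cube hF
  rw [hnorm, one_pow] at hAB
  refine ⟨ENNReal.ofReal_quarter_add_le_of_one_le_sq_mul_cube (by positivity)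
    (pi_sq_div_sq_le_one_div_eight hc) hA hAB, ?_⟩
  rintro rfl
  rw [ENNReal.ofReal_add (by norm_num) (by positivity)]
  simp
end

section
/- Let w : D → [0,∞) be integrable on D ⊂ ℝ^d, let r > 0, c > 0 and suppose that for every x ∈ D with B_r(x) ⊂ D: if the average of w on B_r(x) is ≤ cr then w ≡ 0 on B_{r/4}(x). Then the set {x ∈ D : dist(x, ∂D) > 2r, w(x) > 0 at some Lebesgue point} can be covered by N balls of radius 2r, where N is the largest integer with N ≤ (c ω_d r^{d+1})^{-1} ∫_D w dx and ω_d = |B_1|. -/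
open MeasureTheory Set Metric

/-!
Each point `x` of the set to be covered satisfies `B_r(x) ⊆ D` and `w(x) > 0`, so the density
estimate forces `∫_{B_r(x)} w > c r |B_r| = c ω_d r^{d+1}`. The `r`-balls around a
`2r`-separated family of such points are disjoint, hence such a family has at most
`N = ⌊(c ω_d r^{d+1})⁻¹ ∫_D w⌋` members, and a separated family of maximal cardinality is a
`2r`-net of the set.
-/

theorem card_mul_le_setIntegral_of_pairwiseDisjoint {α ι : Type*} [MeasurableSpace α]
    {μ : Measure α} {f : α → ℝ} {D : Set α} (hf : 0 ≤ᵐ[μ.restrict D] f)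
    (hfD : IntegrableOn f D μ) {s : ι → Set α} {F : Finset ι} {K : ℝ}
    (hs : ∀ i ∈ F, MeasurableSet (s i)) (hsD : ∀ i ∈ F, s i ⊆ D)
    (hdisj : (F : Set ι).PairwiseDisjoint s) (hK : ∀ i ∈ F, K ≤ ∫ x in s i, f x ∂μ) :
    F.card * K ≤ ∫ x in D, f x ∂μ :=
  calc (F.card : ℝ) * K ≤ ∑ i ∈ F, ∫ x in s i, f x ∂μ := by
        simpa only [nsmul_eq_mul] using Finset.card_nsmul_le_sum F _ K hK
    _ = ∫ x in ⋃ i ∈ F, s i, f x ∂μ :=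
        (integral_biUnion_finset F hs hdisj fun i hi => hfD.mono_set (hsD i hi)).symm
    _ ≤ ∫ x in D, f x ∂μ := setIntegral_mono_set hfD hf (iUnion₂_subset hsD).eventuallyLE

theorem exists_separated_finset_subset_iUnion_ball_of_card_le {X : Type*} [PseudoMetricSpace X]
    {S : Set X} {δ : ℝ} (hδ : 0 < δ) {n : ℕ}
    (hcard : ∀ F : Finset X, ↑F ⊆ S → (F : Set X).Pairwise (δ ≤ dist · ·) → F.card ≤ n) :
    ∃ F : Finset X, ↑F ⊆ S ∧ (F : Set X).Pairwise (δ ≤ dist · ·) ∧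
      S ⊆ ⋃ y ∈ F, ball y δ := by
  classical
  let IsSeparatedIn (F : Finset X) : Prop := ↑F ⊆ S ∧ (F : Set X).Pairwise (δ ≤ dist · ·)
  let HasSeparatedOfCard (m : ℕ) : Prop := ∃ F, IsSeparatedIn F ∧ F.card = m
  obtain ⟨F, ⟨hFS, hFsep⟩, hFcard⟩ : HasSeparatedOfCard (Nat.findGreatest HasSeparatedOfCard n) :=
    Nat.findGreatest_spec (Nat.zero_le n) ⟨∅, by simp [IsSeparatedIn], rfl⟩
  refine ⟨F, hFS, hFsep, fun x hx => ?_⟩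
  by_contra hxF
  simp only [mem_iUnion, mem_ball, not_exists, not_lt] at hxF
  have hxF' : x ∉ F := fun h => (hxF x h).not_gt (by simpa using hδ)
  have hins : IsSeparatedIn (insert x F) := by
    refine ⟨by simpa using insert_subset hx hFS, ?_⟩
    rw [Finset.coe_insert, pairwise_insert]
    exact ⟨hFsep, fun y hy _ => ⟨hxF y hy, dist_comm x y ▸ hxF y hy⟩⟩
  have hle : (insert x F).card ≤ Nat.findGreatest HasSeparatedOfCard n :=
    Nat.le_findGreatest (hcard _ hins.1 hins.2) ⟨_, hins, rfl⟩
  rw [Finset.card_insert_of_notMem hxF'] at hle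
  omega

theorem covering_of_density_estimate_general (d : ℕ)
    (D : Set (EuclideanSpace ℝ (Fin d)))
    (w : EuclideanSpace ℝ (Fin d) → ℝ) (hw : ∀ x, 0 ≤ w x)
    (hint : IntegrableOn w D)
    (r c : ℝ) (hr : 0 < r) (hc : 0 < c)
    (hdens : ∀ x ∈ D, Metric.ball x r ⊆ D →
      (∫ y in Metric.ball x r, w y) ≤ c * r * (volume (Metric.ball x r)).toReal →
      ∀ y ∈ Metric.ball x (r / 4), w y = 0) :
    ∃ T : Finset (EuclideanSpace ℝ (Fin d)),
      (T.card : ℝ) ≤ (∫ x in D, w x) /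
        (c * (volume (Metric.ball (0 : EuclideanSpace ℝ (Fin d)) 1)).toReal * r ^ (d + 1)) ∧
      {x | x ∈ D ∧ 2 * r < Metric.infDist x Dᶜ ∧ 0 < w x} ⊆
        ⋃ y ∈ T, Metric.ball y (2 * r) := by
  set S := {x | x ∈ D ∧ 2 * r < infDist x Dᶜ ∧ 0 < w x}
  set ω := (volume (ball (0 : EuclideanSpace ℝ (Fin d)) 1)).toReal
  have hω : 0 < ω :=
    ENNReal.toReal_pos (measure_ball_pos volume _ one_pos).ne' measure_ball_lt_top.ne
  set K := c * ω * r ^ (d + 1)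
  have hK : 0 < K := by positivity
  have hball : ∀ x ∈ S, ball x r ⊆ D := fun x hx =>
    (ball_subset_ball (by linarith [hx.2.1])).trans ball_infDist_compl_subset
  have hmass : ∀ x ∈ S, K ≤ ∫ y in ball x r, w y := by
    intro x hx
    by_contra! hlt
    have hvol : c * r * (volume (ball x r)).toReal = K := by
      rw [Measure.addHaar_ball_of_pos volume x hr, finrank_euclideanSpace_fin, ENNReal.toReal_mul,
        ENNReal.toReal_ofReal (by positivity)]
      ring
    exact hx.2.2.ne' (hdens x hx.1 (hball x hx) (hvol ▸ hlt.le) x (mem_ball_self (by positivity)))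
  have hbound : ∀ F : Finset (EuclideanSpace ℝ (Fin d)), ↑F ⊆ S →
      (F : Set (EuclideanSpace ℝ (Fin d))).Pairwise (2 * r ≤ dist · ·) →
      F.card * K ≤ ∫ x in D, w x :=
    fun F hFS hFsep => card_mul_le_setIntegral_of_pairwiseDisjoint (ae_of_all _ hw) hint
      (fun _ _ => measurableSet_ball) (fun t ht => hball t (hFS ht))
      (fun a ha b hb hab => ball_disjoint_ball (by linarith [hFsep ha hb hab]))
      (fun t ht => hmass t (hFS ht))
  obtain ⟨T, hTS, hTsep, hcover⟩ := exists_separated_finset_subset_iUnion_ball_of_card_le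
    (n := ⌊(∫ x in D, w x) / K⌋₊) (by positivity : 0 < 2 * r)
    fun F hFS hFsep => Nat.le_floor ((le_div_iff₀ hK).2 (hbound F hFS hFsep))
  exact ⟨T, (le_div_iff₀ hK).2 (hbound T hTS hTsep), hcover⟩

/-- Covering argument for shape subsolutions: let `w ≥ 0` be integrable on an open
`D ⊆ ℝ^d` and suppose the density estimate holds: for every ball `B_r(x) ⊆ D`, if the
average of `w` on `B_r(x)` is at most `c·r` then `w ≡ 0` on `B_{r/4}(x)`. Then the set
`{x ∈ D : dist(x,∂D) > 2r, w(x) > 0}` can be covered by `N` balls of radius `2r`, where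
`N ≤ (c ω_d r^{d+1})⁻¹ ∫_D w` and `ω_d = |B₁|`. -/
theorem covering_of_density_estimate (d : ℕ) (hd : 0 < d)
    (D : Set (EuclideanSpace ℝ (Fin d))) (hDopen : IsOpen D)
    (w : EuclideanSpace ℝ (Fin d) → ℝ) (hw : ∀ x, 0 ≤ w x)
    (hint : IntegrableOn w D)
    (r c : ℝ) (hr : 0 < r) (hc : 0 < c)
    (hdens : ∀ x ∈ D, Metric.ball x r ⊆ D →
      (∫ y in Metric.ball x r, w y) ≤ c * r * (volume (Metric.ball x r)).toReal →
      ∀ y ∈ Metric.ball x (r / 4), w y = 0) :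
    ∃ T : Finset (EuclideanSpace ℝ (Fin d)),
      (T.card : ℝ) ≤ (∫ x in D, w x) /
        (c * (volume (Metric.ball (0 : EuclideanSpace ℝ (Fin d)) 1)).toReal * r ^ (d + 1)) ∧
      {x | x ∈ D ∧ 2 * r < Metric.infDist x Dᶜ ∧ 0 < w x} ⊆
        ⋃ y ∈ T, Metric.ball y (2 * r) :=
  covering_of_density_estimate_general d D w hw hint r c hr hc hdens
end
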